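/- arXiv:2603.10346 — 6 statements merged into one kernel-verified Lean document; each statement's English description precedes it below -/
import Mathlib

section
/- Let X be a finite subset of ℝ^d, let P = conv(X), and let x be an extreme point of X such that P ⊆ x + cone({x' - x : x' adjacent to x}). Then for any θ ∈ ℝ^d, there exists y ∈ X with (y - x)ᵀθ > 0 if and only if there exists z adjacent to x with (z - x)ᵀθ > 0. -/
open Matrix

/-- The set of maximizers of `y ↦ y ⬝ᵥ w` over `P`. -/
def argmaxSet {d : ℕ} (P : Set (Fin d → ℝ)) (w : Fin d → ℝ) : Set (Fin d → ℝ) :=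
  {y ∈ P | ∀ z ∈ P, z ⬝ᵥ w ≤ y ⬝ᵥ w}

/-- `x` is an extreme point (vertex) of the polytope `conv X`. -/
def IsExtremePt {d : ℕ} (X : Finset (Fin d → ℝ)) (x : Fin d → ℝ) : Prop :=
  x ∈ X ∧ ∃ w : Fin d → ℝ, argmaxSet (convexHull ℝ (X : Set (Fin d → ℝ))) w = {x}

/-- Two distinct extreme points `x, x'` of `X` are adjacent if the segment
`conv {x, x'}` is exactly the argmax set of some linear functional. -/
def AdjacentPts {d : ℕ} (X : Finset (Fin d → ℝ)) (x x' : Fin d → ℝ) : Prop :=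
  IsExtremePt X x ∧ IsExtremePt X x' ∧ x ≠ x' ∧
    ∃ w : Fin d → ℝ,
      argmaxSet (convexHull ℝ (X : Set (Fin d → ℝ))) w = convexHull ℝ {x, x'}

theorem exists_pos_dotProduct_of_sum_smul {m ι : Type*} [Fintype m] (s : Finset ι)
    (c : ι → ℝ) (hc : ∀ i ∈ s, 0 ≤ c i) (u : ι → m → ℝ) (θ : m → ℝ)
    (h : 0 < (∑ i ∈ s, c i • u i) ⬝ᵥ θ) :
    ∃ i ∈ s, c i ≠ 0 ∧ 0 < u i ⬝ᵥ θ := by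
  simp only [sum_dotProduct, smul_dotProduct, smul_eq_mul] at h
  obtain ⟨i, hi, hpos⟩ := Finset.exists_lt_of_sum_lt (f := fun _ => 0)
    (g := fun i => c i * u i ⬝ᵥ θ) (by rwa [Finset.sum_const_zero])
  have hci : c i ≠ 0 := fun h0 => by simp [h0] at hpos
  exact ⟨i, hi, hci, pos_of_mul_pos_right hpos (hc i hi)⟩

theorem stmt0_general {d : ℕ} (X : Finset (Fin d → ℝ)) (x : Fin d → ℝ)
    (hcone : convexHull ℝ (X : Set (Fin d → ℝ)) ⊆
      {p | ∃ α : (Fin d → ℝ) → ℝ, (∀ z, 0 ≤ α z) ∧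
        (∀ z, α z ≠ 0 → AdjacentPts X x z) ∧
        p = x + ∑ z ∈ X, α z • (z - x)})
    (θ : Fin d → ℝ) :
    (∃ y ∈ X, (y - x) ⬝ᵥ θ > 0) ↔
      (∃ z ∈ X, AdjacentPts X x z ∧ (z - x) ⬝ᵥ θ > 0) := by
  refine ⟨fun ⟨y, hy, hyθ⟩ => ?_, fun ⟨z, hz, _, hzθ⟩ => ⟨z, hz, hzθ⟩⟩
  obtain ⟨α, hα0, hαadj, rfl⟩ := hcone (subset_convexHull ℝ _ hy)
  rw [add_sub_cancel_left] at hyθ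
  obtain ⟨z, hz, hαz, hzθ⟩ :=
    exists_pos_dotProduct_of_sum_smul X α (fun z _ => hα0 z) _ θ hyθ
  exact ⟨z, hz, hαadj z hαz, hzθ⟩

theorem stmt0 {d : ℕ} (X : Finset (Fin d → ℝ)) (x : Fin d → ℝ)
    (hx : IsExtremePt X x)
    (hcone : convexHull ℝ (X : Set (Fin d → ℝ)) ⊆
      {p | ∃ α : (Fin d → ℝ) → ℝ, (∀ z, 0 ≤ α z) ∧
        (∀ z, α z ≠ 0 → AdjacentPts X x z) ∧
        p = x + ∑ z ∈ X, α z • (z - x)})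
    (θ : Fin d → ℝ) :
    (∃ y ∈ X, (y - x) ⬝ᵥ θ > 0) ↔
      (∃ z ∈ X, AdjacentPts X x z ∧ (z - x) ⬝ᵥ θ > 0) :=
  stmt0_general X x hcone θ
end

section
/- Let A be a positive definite d×d matrix, x, x' ∈ ℝ^d with x ≠ x', and Δ > 0. Suppose θ, v ∈ ℝ^d satisfy (x - x')ᵀθ ≥ Δ and (x' - x)ᵀ(θ + v) ≥ Δ. Then vᵀAv ≥ 4Δ² / ‖x - x'‖²_{A⁻¹}, where ‖z‖²_{A⁻¹} = zᵀA⁻¹z. -/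
/-!
Adding the two constraints gives `(x - x') ⬝ᵥ v ≤ -2Δ`, so `4Δ² ≤ ((x - x') ⬝ᵥ v)²`.
Cauchy–Schwarz in the inner product `⟪a, b⟫ = a ⬝ᵥ A *ᵥ b`, applied to `A⁻¹ *ᵥ (x - x')` and `v`,
bounds `((x - x') ⬝ᵥ v)²` by `‖x - x'‖²_{A⁻¹} · vᵀAv`.
-/

open Matrix

namespace Matrix

variable {n : Type*} [Fintype n] {A : Matrix n n ℝ}

theorem PosSemidef.sq_dotProduct_mulVec_le (hA : A.PosSemidef) (a b : n → ℝ) :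
    (a ⬝ᵥ A *ᵥ b) ^ 2 ≤ (a ⬝ᵥ A *ᵥ a) * (b ⬝ᵥ A *ᵥ b) := by
  let := A.toSeminormedAddCommGroup hA
  let := A.toInnerProductSpace hA
  have inner_eq (u w : n → ℝ) : inner ℝ u w = u ⬝ᵥ A *ᵥ w := by
    change (A *ᵥ w) ⬝ᵥ star u = _
    rw [star_trivial, dotProduct_comm]
  simpa only [inner_eq, sq] using real_inner_mul_inner_self_le a b

theorem PosDef.sq_dotProduct_le_inv_mul [DecidableEq n] (hA : A.PosDef) (u v : n → ℝ) :
    (u ⬝ᵥ v) ^ 2 ≤ (u ⬝ᵥ A⁻¹ *ᵥ u) * (v ⬝ᵥ A *ᵥ v) := by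
  have hdet : IsUnit A.det := hA.det_pos.ne'.isUnit
  have hsymm : A⁻¹ *ᵥ u = u ᵥ* A⁻¹ := by
    rw [← vecMul_transpose, show A⁻¹ᵀ = A⁻¹ from hA.inv.isHermitian.eq]
  calc (u ⬝ᵥ v) ^ 2 = (A⁻¹ *ᵥ u ⬝ᵥ A *ᵥ v) ^ 2 := by
        rw [hsymm, ← dotProduct_mulVec, mulVec_mulVec, nonsing_inv_mul _ hdet, one_mulVec]
    _ ≤ (A⁻¹ *ᵥ u ⬝ᵥ A *ᵥ (A⁻¹ *ᵥ u)) * (v ⬝ᵥ A *ᵥ v) :=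
        hA.posSemidef.sq_dotProduct_mulVec_le _ _
    _ = (u ⬝ᵥ A⁻¹ *ᵥ u) * (v ⬝ᵥ A *ᵥ v) := by
        rw [mulVec_mulVec, mul_nonsing_inv _ hdet, one_mulVec, dotProduct_comm]

end Matrix

theorem stmt1_general {d : ℕ} (A : Matrix (Fin d) (Fin d) ℝ) (hA : A.PosDef)
    (x x' θ v : Fin d → ℝ) (Δ : ℝ) (hΔ : 0 < Δ)
    (h1 : (x - x') ⬝ᵥ θ ≥ Δ) (h2 : (x' - x) ⬝ᵥ (θ + v) ≥ Δ) :
    v ⬝ᵥ A.mulVec v ≥ 4 * Δ ^ 2 / ((x - x') ⬝ᵥ A⁻¹.mulVec (x - x')) := by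
  have huv : (x - x') ⬝ᵥ v ≤ -(2 * Δ) := by
    rw [← neg_sub, neg_dotProduct, dotProduct_add] at h2
    linarith
  have hsq : 4 * Δ ^ 2 ≤ ((x - x') ⬝ᵥ v) ^ 2 := by nlinarith
  exact div_le_of_le_mul₀ (hA.inv.posSemidef.dotProduct_mulVec_nonneg _)
    (hA.posSemidef.dotProduct_mulVec_nonneg _)
    (hsq.trans ((hA.sq_dotProduct_le_inv_mul _ v).trans_eq (mul_comm _ _)))

theorem stmt1 {d : ℕ} (A : Matrix (Fin d) (Fin d) ℝ) (hA : A.PosDef)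
    (x x' θ v : Fin d → ℝ) (hxx : x ≠ x') (Δ : ℝ) (hΔ : 0 < Δ)
    (h1 : (x - x') ⬝ᵥ θ ≥ Δ) (h2 : (x' - x) ⬝ᵥ (θ + v) ≥ Δ) :
    v ⬝ᵥ A.mulVec v ≥ 4 * Δ ^ 2 / ((x - x') ⬝ᵥ A⁻¹.mulVec (x - x')) :=
  stmt1_general A hA x x' θ v Δ hΔ h1 h2
end

section
/- Let A be a positive definite d×d matrix, Δ > 0, V a finite subset of ℝ^d containing distinct points x and x', and w ∈ ℝ^d, ε > 0 such that xᵀw = x'ᵀw and xᵀw ≥ yᵀw + ε for all y ∈ V \ {x, x'}. Then there exist θ, v ∈ ℝ^d with vᵀAv = 4Δ² / ‖x - x'‖²_{A⁻¹}, such that (x - y)ᵀθ ≥ Δ for all y ∈ V \ {x}, and (x' - y)ᵀ(θ + v) ≥ Δ for all y ∈ V \ {x'}. -/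
/-!
With `S = ‖x - x'‖²_{A⁻¹}` and `p = (Δ / S) • A⁻¹ (x - x')`, the vector `p` separates `x` from `x'`
with margin `Δ` in both directions (`θ = p + α w` and `θ + v = -p + α w`), while `w` does not
distinguish `x` from `x'` but puts both strictly above the rest of `V`; since `V` is finite, a
large enough `α` makes the `w`-term dominate on all other points.
-/

open Matrix Filter

section

variable {n : Type*} [Fintype n]

theorem smul_inv_mulVec_dotProduct_mulVec {A : Matrix n n ℝ} [DecidableEq n] (hA : IsUnit A.det)
    (c : ℝ) (z : n → ℝ) :
    (c • A⁻¹ *ᵥ z) ⬝ᵥ A *ᵥ (c • A⁻¹ *ᵥ z) = c ^ 2 * (z ⬝ᵥ A⁻¹ *ᵥ z) := by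
  rw [mulVec_smul, mulVec_mulVec, mul_nonsing_inv A hA, one_mulVec, smul_dotProduct,
    dotProduct_smul, dotProduct_comm, smul_eq_mul, smul_eq_mul]
  ring

theorem eventually_forall_le_dotProduct_add_smul (V : Finset (n → ℝ)) {x x' p w : n → ℝ} {Δ : ℝ}
    (hp : (x - x') ⬝ᵥ p = Δ) (hw : x ⬝ᵥ w = x' ⬝ᵥ w)
    (hsep : ∀ y ∈ V, y ≠ x → y ≠ x' → y ⬝ᵥ w < x ⬝ᵥ w) :
    ∀ᶠ α : ℝ in atTop, ∀ y ∈ V, y ≠ x → Δ ≤ (x - y) ⬝ᵥ (p + α • w) := by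
  refine (eventually_all_finset V).2 fun y hy => eventually_imp_distrib_left.2 fun hyx => ?_
  simp only [dotProduct_add, dotProduct_smul, smul_eq_mul]
  by_cases hyx' : y = x'
  · subst hyx'
    simp [hp, sub_dotProduct, hw]
  · have hgap : 0 < (x - y) ⬝ᵥ w := by
      rw [sub_dotProduct, sub_pos]
      exact hsep y hy hyx hyx'
    exact (tendsto_atTop_add_const_left _ _
      (tendsto_id.atTop_mul_const hgap)).eventually_ge_atTop Δ

end

theorem stmt3_general {d : ℕ} (A : Matrix (Fin d) (Fin d) ℝ) (hA : A.PosDef)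
    (Δ : ℝ) (V : Finset (Fin d → ℝ)) (x x' : Fin d → ℝ)
    (hne : x ≠ x')
    (w : Fin d → ℝ) (ε : ℝ) (hε : 0 < ε)
    (hw : x ⬝ᵥ w = x' ⬝ᵥ w)
    (hsep : ∀ y ∈ V, y ≠ x → y ≠ x' → x ⬝ᵥ w ≥ y ⬝ᵥ w + ε) :
    ∃ θ v : Fin d → ℝ,
      v ⬝ᵥ A.mulVec v = 4 * Δ ^ 2 / ((x - x') ⬝ᵥ A⁻¹.mulVec (x - x')) ∧
      (∀ y ∈ V, y ≠ x → (x - y) ⬝ᵥ θ ≥ Δ) ∧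
      (∀ y ∈ V, y ≠ x' → (x' - y) ⬝ᵥ (θ + v) ≥ Δ) := by
  set u := A⁻¹ *ᵥ (x - x')
  have hS : 0 < (x - x') ⬝ᵥ u := by
    simpa using hA.inv.dotProduct_mulVec_pos (sub_ne_zero.mpr hne)
  set S := (x - x') ⬝ᵥ u
  set p := (Δ / S) • u
  have hp : (x - x') ⬝ᵥ p = Δ := by
    rw [dotProduct_smul, smul_eq_mul, div_mul_cancel₀ _ hS.ne']
  have hp' : (x' - x) ⬝ᵥ -p = Δ := by
    rw [dotProduct_neg, ← neg_dotProduct, neg_sub, hp]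
  have hlt : ∀ y ∈ V, y ≠ x → y ≠ x' → y ⬝ᵥ w < x ⬝ᵥ w := fun y hy hyx hyx' => by
    linarith [hsep y hy hyx hyx']
  have hlt' : ∀ y ∈ V, y ≠ x' → y ≠ x → y ⬝ᵥ w < x' ⬝ᵥ w := fun y hy hyx' hyx =>
    hw ▸ hlt y hy hyx hyx'
  obtain ⟨α, hθ, hθv⟩ := ((eventually_forall_le_dotProduct_add_smul V hp hw hlt).and
    (eventually_forall_le_dotProduct_add_smul V hp' hw.symm hlt')).exists
  refine ⟨p + α • w, (-(2 * Δ / S)) • u, ?_, hθ, fun y hy hyx' => ?_⟩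
  · rw [smul_inv_mulVec_dotProduct_mulVec (isUnit_iff_ne_zero.mpr hA.det_pos.ne')]
    field_simp
    ring
  · convert hθv y hy hyx' using 2
    simp only [p]
    module

theorem stmt3 {d : ℕ} (A : Matrix (Fin d) (Fin d) ℝ) (hA : A.PosDef)
    (Δ : ℝ) (hΔ : 0 < Δ) (V : Finset (Fin d → ℝ)) (x x' : Fin d → ℝ)
    (hx : x ∈ V) (hx' : x' ∈ V) (hne : x ≠ x')
    (w : Fin d → ℝ) (ε : ℝ) (hε : 0 < ε)
    (hw : x ⬝ᵥ w = x' ⬝ᵥ w)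
    (hsep : ∀ y ∈ V, y ≠ x → y ≠ x' → x ⬝ᵥ w ≥ y ⬝ᵥ w + ε) :
    ∃ θ v : Fin d → ℝ,
      v ⬝ᵥ A.mulVec v = 4 * Δ ^ 2 / ((x - x') ⬝ᵥ A⁻¹.mulVec (x - x')) ∧
      (∀ y ∈ V, y ≠ x → (x - y) ⬝ᵥ θ ≥ Δ) ∧
      (∀ y ∈ V, y ≠ x' → (x' - y) ⬝ᵥ (θ + v) ≥ Δ) :=
  stmt3_general A hA Δ V x x' hne w ε hε hw hsep
end

section
/- Let θ ∈ ℝ^d, let M be a positive definite d×d matrix, let x*, x ∈ ℝ^d with (x* - x)ᵀθ > 0, and suppose x* - x = Σ_{y ∈ I} α_y (x* - y) where I is a finite set of points, each α_y ≥ 0, and (x* - y)ᵀθ > 0 for each y ∈ I. Then ‖x* - x‖²_M / ((x* - x)ᵀθ)² ≤ max_{y ∈ I} ‖x* - y‖²_M / ((x* - y)ᵀθ)². -/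
/-!
For a positive semidefinite symmetric bilinear form `B`, Cauchy–Schwarz turns the bounds
`B vᵢ vᵢ ≤ K tᵢ²` on the diagonal into `B vᵢ vⱼ ≤ K tᵢ tⱼ`, so expanding
`B (∑ αᵢ vᵢ) (∑ αᵢ vᵢ)` gives `≤ K (∑ αᵢ tᵢ)²` when the `αᵢ` are nonnegative. With
`B = M`, `vᵢ = x* - y`, `tᵢ = (x* - y)ᵀθ` and `K` the maximal ratio, this is the claim.
-/

open Matrix

namespace LinearMap.BilinForm

variable {E : Type*} [AddCommGroup E] [Module ℝ E] {B : LinearMap.BilinForm ℝ E}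

theorem apply_le_of_apply_self_le (hs : ∀ x, 0 ≤ B x x) (hB : B.IsSymm) {K a b : ℝ} {x y : E}
    (hK : 0 ≤ K) (ha : 0 ≤ a) (hb : 0 ≤ b) (hx : B x x ≤ K * a ^ 2) (hy : B y y ≤ K * b ^ 2) :
    B x y ≤ K * (a * b) := by
  have hsq : B x y ^ 2 ≤ (K * (a * b)) ^ 2 :=
    calc B x y ^ 2 ≤ B x x * B y y := B.apply_sq_le_of_symm hs (isSymm_iff.1 hB) x y
      _ ≤ K * a ^ 2 * (K * b ^ 2) := mul_le_mul hx hy (hs y) (by positivity)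
      _ = (K * (a * b)) ^ 2 := by ring
  exact (abs_le_of_sq_le_sq' hsq (by positivity)).2

theorem apply_sum_smul_self_le {ι : Type*} (hs : ∀ x, 0 ≤ B x x) (hB : B.IsSymm)
    {s : Finset ι} {α t : ι → ℝ} {v : ι → E} {K : ℝ} (hK : 0 ≤ K) (hα : ∀ i ∈ s, 0 ≤ α i)
    (ht : ∀ i ∈ s, 0 ≤ t i) (hv : ∀ i ∈ s, B (v i) (v i) ≤ K * t i ^ 2) :
    B (∑ i ∈ s, α i • v i) (∑ i ∈ s, α i • v i) ≤ K * (∑ i ∈ s, α i * t i) ^ 2 :=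
  calc B (∑ i ∈ s, α i • v i) (∑ i ∈ s, α i • v i)
      = ∑ i ∈ s, ∑ j ∈ s, α i * α j * B (v i) (v j) := by
        simp only [map_sum, map_smul, LinearMap.sum_apply, LinearMap.smul_apply, smul_eq_mul,
          Finset.mul_sum]
        rw [Finset.sum_comm]
        exact Finset.sum_congr rfl fun i _ => Finset.sum_congr rfl fun j _ => by ring
    _ ≤ ∑ i ∈ s, ∑ j ∈ s, α i * α j * (K * (t i * t j)) :=
        Finset.sum_le_sum fun i hi => Finset.sum_le_sum fun j hj =>
          mul_le_mul_of_nonneg_left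
            (apply_le_of_apply_self_le hs hB hK (ht i hi) (ht j hj) (hv i hi) (hv j hj))
            (mul_nonneg (hα i hi) (hα j hj))
    _ = K * (∑ i ∈ s, α i * t i) ^ 2 := by
        rw [sq, Finset.sum_mul_sum, Finset.mul_sum]
        exact Finset.sum_congr rfl fun i _ => by
          rw [Finset.mul_sum]
          exact Finset.sum_congr rfl fun j _ => by ring

end LinearMap.BilinForm

theorem Matrix.PosSemidef.dotProduct_mulVec_sum_smul_le {n ι : Type*} [Fintype n] [DecidableEq n]
    {M : Matrix n n ℝ} (hM : M.PosSemidef) {s : Finset ι} {α t : ι → ℝ} {v : ι → n → ℝ} {K : ℝ}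
    (hK : 0 ≤ K) (hα : ∀ i ∈ s, 0 ≤ α i) (ht : ∀ i ∈ s, 0 ≤ t i)
    (hv : ∀ i ∈ s, v i ⬝ᵥ M *ᵥ v i ≤ K * t i ^ 2) :
    (∑ i ∈ s, α i • v i) ⬝ᵥ M *ᵥ (∑ i ∈ s, α i • v i) ≤ K * (∑ i ∈ s, α i * t i) ^ 2 := by
  have hs (x : n → ℝ) : 0 ≤ M.toBilin' x x := by
    simpa [toBilin'_apply'] using hM.dotProduct_mulVec_nonneg x
  have hB : M.toBilin'.IsSymm :=
    isSymm_toBilin'_iff_isSymm.2 (isHermitian_iff_isSymm.1 hM.isHermitian)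
  simpa only [toBilin'_apply'] using
    LinearMap.BilinForm.apply_sum_smul_self_le hs hB hK hα ht (by simpa only [toBilin'_apply'])

theorem stmt4 {d : ℕ} (θ : Fin d → ℝ) (M : Matrix (Fin d) (Fin d) ℝ) (hM : M.PosDef)
    (xs x : Fin d → ℝ) (I : Finset (Fin d → ℝ)) (hI : I.Nonempty)
    (α : (Fin d → ℝ) → ℝ) (hα : ∀ y ∈ I, 0 ≤ α y)
    (hx : (xs - x) ⬝ᵥ θ > 0)
    (hpos : ∀ y ∈ I, (xs - y) ⬝ᵥ θ > 0)
    (hsum : xs - x = ∑ y ∈ I, α y • (xs - y)) :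
    ((xs - x) ⬝ᵥ M.mulVec (xs - x)) / ((xs - x) ⬝ᵥ θ) ^ 2 ≤
      I.sup' hI (fun y => ((xs - y) ⬝ᵥ M.mulVec (xs - y)) / ((xs - y) ⬝ᵥ θ) ^ 2) := by
  set ratio := fun y => ((xs - y) ⬝ᵥ M.mulVec (xs - y)) / ((xs - y) ⬝ᵥ θ) ^ 2
  set K := I.sup' hI ratio
  have hK : 0 ≤ K := by
    obtain ⟨y, hy⟩ := hI
    exact (div_nonneg (by simpa using hM.posSemidef.dotProduct_mulVec_nonneg (xs - y))
      (sq_nonneg _)).trans (I.le_sup' ratio hy)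
  have hbound : ∀ y ∈ I, (xs - y) ⬝ᵥ M *ᵥ (xs - y) ≤ K * ((xs - y) ⬝ᵥ θ) ^ 2 := fun y hy =>
    (div_le_iff₀ (pow_pos (hpos y hy) 2)).1 (I.le_sup' ratio hy)
  have hθ : (xs - x) ⬝ᵥ θ = ∑ y ∈ I, α y * ((xs - y) ⬝ᵥ θ) := by
    simp only [hsum, sum_dotProduct, smul_dotProduct, smul_eq_mul]
  rw [div_le_iff₀ (pow_pos hx 2), hθ, hsum]
  exact hM.posSemidef.dotProduct_mulVec_sum_smul_le hK hα (fun y hy => (hpos y hy).le) hbound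
end

section
/- Let a₁, …, a_T ∈ ℝ^d with T ≥ 2. Then Σ_{t=1}^{T−1} ‖a_t − (1/(T−t)) Σ_{s=t+1}^T a_s‖₂² ≤ 2 Σ_{t=1}^T ‖a_t‖₂². -/
/-!
Write `u_t` for the deviation of `x_t` from the mean of `x_{t+1}, …, x_{T-1}`. The vectors
`e_t - (e_{t+1} + ⋯ + e_{T-1}) / (T - t - 1)`, together with the all-ones vector, form an
orthogonal (Helmert) basis of `ℝ^T`, and expanding `x` in it gives the exact identity
`‖x‖² = ∑_t (T-t-1)/(T-t) · u_t² + (∑_t x_t)² / T`, proved below by peeling off `x_0`.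
Every weight `(T-t-1)/(T-t)` is at least `1/2`, whence `∑_t u_t² ≤ 2 ‖x‖²`; the vector
statement follows coordinatewise.
-/

open Finset

noncomputable def tailMeanDeviation (x : ℕ → ℝ) (T t : ℕ) : ℝ :=
  x t - 1 / ((T : ℝ) - t - 1) * ∑ s ∈ Ico (t + 1) T, x s

lemma tailMeanDeviation_succ (x : ℕ → ℝ) (T t : ℕ) :
    tailMeanDeviation x (T + 1) (t + 1) = tailMeanDeviation (fun s => x (s + 1)) T t := by
  simp only [tailMeanDeviation, sum_Ico_add' x (t + 1) T 1]
  push_cast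
  ring_nf

lemma helmert_sum_sq (x : ℕ → ℝ) (n : ℕ) :
    ∑ t ∈ range n, ((n : ℝ) - t) / ((n : ℝ) - t + 1) * tailMeanDeviation x (n + 1) t ^ 2
        + (∑ t ∈ range (n + 1), x t) ^ 2 / (n + 1) =
      ∑ t ∈ range (n + 1), x t ^ 2 := by
  induction n generalizing x with
  | zero => simp
  | succ n ih =>
    have htail := ih fun s => x (s + 1)
    set S := ∑ t ∈ range (n + 1), x (t + 1)
    have hhead : tailMeanDeviation x (n + 2) 0 = x 0 - S / (n + 1) := by
      simp only [tailMeanDeviation, S, ← sum_Ico_add' x 0 (n + 1) 1, ← range_eq_Ico]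
      push_cast
      ring
    have hweights : ∀ t ∈ range n,
        (((n + 1 : ℕ) : ℝ) - (t + 1 : ℕ)) / (((n + 1 : ℕ) : ℝ) - (t + 1 : ℕ) + 1) *
          tailMeanDeviation x (n + 1 + 1) (t + 1) ^ 2 =
        ((n : ℝ) - t) / ((n : ℝ) - t + 1) * tailMeanDeviation (fun s => x (s + 1)) (n + 1) t ^ 2 := by
      intro t _
      rw [tailMeanDeviation_succ]
      push_cast
      ring_nf
    have hsplit : ((n + 1 : ℝ) / (n + 2)) * (x 0 - S / (n + 1)) ^ 2 + (S + x 0) ^ 2 / (n + 2) =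
        x 0 ^ 2 + S ^ 2 / (n + 1) := by
      field_simp
      ring
    rw [sum_range_succ', sum_range_succ' _ (n + 1), sum_range_succ' (fun t => x t ^ 2),
      sum_congr rfl hweights, hhead]
    push_cast
    linear_combination htail + hsplit

lemma sum_sq_tailMeanDeviation_le (x : ℕ → ℝ) (T : ℕ) :
    ∑ t ∈ range (T - 1), tailMeanDeviation x T t ^ 2 ≤ 2 * ∑ t ∈ range T, x t ^ 2 := by
  cases T with
  | zero => simp
  | succ n =>
    rw [Nat.add_sub_cancel, ← helmert_sum_sq x n, mul_add, mul_sum]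
    have hweighted : ∀ t ∈ range n, tailMeanDeviation x (n + 1) t ^ 2 ≤
        2 * (((n : ℝ) - t) / ((n : ℝ) - t + 1) * tailMeanDeviation x (n + 1) t ^ 2) := by
      intro t ht
      have hgap : (1 : ℝ) ≤ n - t := by
        have : (t : ℝ) + 1 ≤ n := by exact_mod_cast mem_range.mp ht
        linarith
      have hhalf : 1 / 2 ≤ ((n : ℝ) - t) / ((n : ℝ) - t + 1) := by
        rw [le_div_iff₀ (by linarith)]
        linarith
      nlinarith [sq_nonneg (tailMeanDeviation x (n + 1) t)]
    have hmean : 0 ≤ 2 * ((∑ t ∈ range (n + 1), x t) ^ 2 / (n + 1)) := by positivity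
    linarith [sum_le_sum hweighted]

theorem stmt7_general {d T : ℕ} (a : ℕ → (Fin d → ℝ)) :
    ∑ t ∈ Finset.range (T - 1), ∑ i : Fin d,
        (a t i - (1 / ((T : ℝ) - t - 1)) * ∑ s ∈ Finset.Ico (t + 1) T, a s i) ^ 2 ≤
      2 * ∑ t ∈ Finset.range T, ∑ i : Fin d, (a t i) ^ 2 := by
  rw [sum_comm, sum_comm (s := range T), mul_sum]
  exact sum_le_sum fun i _ => sum_sq_tailMeanDeviation_le (fun t => a t i) T

/-- 0-indexed version of the paper's statement: for `t ∈ {0,…,T−2}` (paper's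
`t+1 ∈ [T−1]`), the average is over `s ∈ {t+1,…,T−1}`, which has `T−t−1` elements
(the paper's `T − t`). -/
theorem stmt7 {d T : ℕ} (hT : 2 ≤ T) (a : ℕ → (Fin d → ℝ)) :
    ∑ t ∈ Finset.range (T - 1), ∑ i : Fin d,
        (a t i - (1 / ((T : ℝ) - t - 1)) * ∑ s ∈ Finset.Ico (t + 1) T, a s i) ^ 2 ≤
      2 * ∑ t ∈ Finset.range T, ∑ i : Fin d, (a t i) ^ 2 :=
  stmt7_general a
end

section
/- Let X ⊂ ℝ^d be finite spanning ℝ^d, let V be the set of extreme points of conv(X), let θ ∈ ℝ^d, and let x* ∈ V be such that (x* − x)ᵀθ > 0 for all x ∈ X \ {x*}. Assume conv(X) ⊆ x* + cone({y − x* : y ∈ I}) where I is the set of extreme points adjacent to x*. Then for any positive definite matrix M, max over x ∈ X \ {x*} of ‖x* − x‖²_M / ((x* − x)ᵀθ)² equals max over x' ∈ I of ‖x* − x'‖²_M / ((x* − x')ᵀθ)². -/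
open Matrix

/-!
Write `r(v) = vᵀMv / (vᵀθ)²`. By the cone hypothesis every `x* - x` with `x ∈ X` is a conic
combination `∑ α_y (x* - y)` of the directions to the adjacent vertices `y`. Since `r` is invariant
under positive scaling, normalise every direction to `vᵀθ = 1`: then `(x* - x) / (x* - x)ᵀθ` is a
convex combination of the normalised directions, and Jensen's inequality for the convex quadratic
form `v ↦ vᵀMv` bounds `r(x* - x)` by `r(x* - y)` for one of the adjacent `y`.
-/

open Set

lemma Matrix.PosSemidef.dotProduct_mulVec_comm {n : Type*} [Fintype n] {M : Matrix n n ℝ}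
    (hM : M.PosSemidef) (x y : n → ℝ) : y ⬝ᵥ M *ᵥ x = x ⬝ᵥ M *ᵥ y := by
  rw [dotProduct_mulVec, ← mulVec_transpose, (isHermitian_iff_isSymm.1 hM.1).eq, dotProduct_comm]

lemma Matrix.PosSemidef.convexOn_dotProduct_mulVec {n : Type*} [Fintype n] {M : Matrix n n ℝ}
    (hM : M.PosSemidef) : ConvexOn ℝ univ fun v : n → ℝ => v ⬝ᵥ M *ᵥ v := by
  refine ⟨convex_univ, fun x _ y _ a b ha hb hab => ?_⟩
  have hdiff : 0 ≤ (x - y) ⬝ᵥ M *ᵥ (x - y) := by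
    simpa using hM.dotProduct_mulVec_nonneg (x - y)
  simp only [smul_eq_mul, mulVec_add, mulVec_smul, mulVec_sub, dotProduct_add, add_dotProduct,
    dotProduct_sub, sub_dotProduct, smul_dotProduct, dotProduct_smul,
    hM.dotProduct_mulVec_comm x y] at hdiff ⊢
  obtain rfl : b = 1 - a := by linarith
  linear_combination (a * (1 - a)) * hdiff

lemma Matrix.smul_dotProduct_mulVec_smul {n : Type*} [Fintype n] (M : Matrix n n ℝ) (c : ℝ)
    (v : n → ℝ) : (c • v) ⬝ᵥ M *ᵥ (c • v) = c ^ 2 * (v ⬝ᵥ M *ᵥ v) := by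
  rw [mulVec_smul, smul_dotProduct, dotProduct_smul, smul_eq_mul, smul_eq_mul]
  ring

lemma ConvexOn.exists_div_sq_le_of_sum_smul {E ι : Type*} [AddCommGroup E] [Module ℝ E]
    {q : E → ℝ} (hq : ConvexOn ℝ univ q) (hhom : ∀ (c : ℝ) v, q (c • v) = c ^ 2 * q v)
    (ℓ : E →ₗ[ℝ] ℝ) {A : Finset ι} {α : ι → ℝ} {v : ι → E} (hα : ∀ i ∈ A, 0 ≤ α i)
    (hℓ : ∀ i ∈ A, 0 < ℓ (v i)) (hpos : 0 < ℓ (∑ i ∈ A, α i • v i)) :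
    ∃ i ∈ A, q (∑ i ∈ A, α i • v i) / ℓ (∑ i ∈ A, α i • v i) ^ 2 ≤ q (v i) / ℓ (v i) ^ 2 := by
  have hnormalize : ∀ u, q ((ℓ u)⁻¹ • u) = q u / ℓ u ^ 2 := fun u => by
    rw [hhom, inv_pow, inv_mul_eq_div]
  have hweights : ∑ i ∈ A, α i * ℓ (v i) = ℓ (∑ i ∈ A, α i • v i) := by
    simp only [map_sum, map_smul, smul_eq_mul]
  have hcenter : A.centerMass (fun i => α i * ℓ (v i)) (fun i => (ℓ (v i))⁻¹ • v i) =
      (ℓ (∑ i ∈ A, α i • v i))⁻¹ • ∑ i ∈ A, α i • v i := by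
    rw [Finset.centerMass, hweights]
    congr 1
    refine Finset.sum_congr rfl fun i hi => ?_
    rw [smul_smul, mul_assoc, mul_inv_cancel₀ (hℓ i hi).ne', mul_one]
  obtain ⟨i, hi, hle⟩ := hq.exists_ge_of_centerMass
    (fun i hi => mul_nonneg (hα i hi) (hℓ i hi).le) (hweights ▸ hpos) fun _ _ => mem_univ _
  exact ⟨i, hi, by rwa [hcenter, hnormalize, hnormalize] at hle⟩

lemma exists_adjacentPts_div_sq_le {d : ℕ} {X : Finset (Fin d → ℝ)} {θ xs : Fin d → ℝ}
    (hgap : ∀ x ∈ X, x ≠ xs → (xs - x) ⬝ᵥ θ > 0)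
    (hcone : convexHull ℝ (X : Set (Fin d → ℝ)) ⊆
      {p | ∃ α : (Fin d → ℝ) → ℝ, (∀ z, 0 ≤ α z) ∧
        (∀ z, α z ≠ 0 → AdjacentPts X xs z) ∧
        p = xs + ∑ z ∈ X, α z • (z - xs)})
    {M : Matrix (Fin d) (Fin d) ℝ} (hM : M.PosSemidef) {x : Fin d → ℝ} (hx : x ∈ X)
    (hxs : x ≠ xs) :
    ∃ z, AdjacentPts X xs z ∧
      (xs - x) ⬝ᵥ M *ᵥ (xs - x) / ((xs - x) ⬝ᵥ θ) ^ 2 ≤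
        (xs - z) ⬝ᵥ M *ᵥ (xs - z) / ((xs - z) ⬝ᵥ θ) ^ 2 := by
  obtain ⟨α, hα, hadj, rfl⟩ := hcone (subset_convexHull ℝ _ hx)
  have hsum : xs - (xs + ∑ z ∈ X, α z • (z - xs)) =
      ∑ z ∈ X with α z ≠ 0, α z • (xs - z) := by
    rw [Finset.sum_filter_of_ne fun z _ h => left_ne_zero_of_smul h, sub_add_cancel_left,
      ← Finset.sum_neg_distrib]
    simp only [← smul_neg, neg_sub]
  have hadj' : ∀ z ∈ X.filter (α · ≠ 0), AdjacentPts X xs z := fun z hz =>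
    hadj z (Finset.mem_filter.1 hz).2
  obtain ⟨z, hz, hle⟩ := hM.convexOn_dotProduct_mulVec.exists_div_sq_le_of_sum_smul
    (smul_dotProduct_mulVec_smul M) ((dotProductBilin ℝ ℝ).flip θ) (fun z _ => hα z)
    (fun z hz => hgap z (hadj' z hz).2.1.1 (hadj' z hz).2.2.1.symm)
    (by simpa only [LinearMap.flip_apply, dotProductBilin_apply_apply, ← hsum]
      using hgap _ hx hxs)
  exact ⟨z, hadj' z hz, by
    simpa only [LinearMap.flip_apply, dotProductBilin_apply_apply, ← hsum] using hle⟩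

theorem stmt19_general {d : ℕ} (X : Finset (Fin d → ℝ))
    (θ xs : Fin d → ℝ)
    (hgap : ∀ x ∈ X, x ≠ xs → (xs - x) ⬝ᵥ θ > 0)
    (hcone : convexHull ℝ (X : Set (Fin d → ℝ)) ⊆
      {p | ∃ α : (Fin d → ℝ) → ℝ, (∀ z, 0 ≤ α z) ∧
        (∀ z, α z ≠ 0 → AdjacentPts X xs z) ∧
        p = xs + ∑ z ∈ X, α z • (z - xs)})
    (M : Matrix (Fin d) (Fin d) ℝ) (hM : M.PosDef) :
    sSup ((fun x => ((xs - x) ⬝ᵥ M.mulVec (xs - x)) / ((xs - x) ⬝ᵥ θ) ^ 2) ''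
        ((X : Set (Fin d → ℝ)) \ {xs})) =
      sSup ((fun x' => ((xs - x') ⬝ᵥ M.mulVec (xs - x')) / ((xs - x') ⬝ᵥ θ) ^ 2) ''
        {x' | AdjacentPts X xs x'}) := by
  refine csSup_eq_csSup_of_forall_exists_le ?_ ?_
  · rintro _ ⟨x, ⟨hx, hxs⟩, rfl⟩
    obtain ⟨z, hz, hle⟩ := exists_adjacentPts_div_sq_le hgap hcone hM.posSemidef hx hxs
    exact ⟨_, ⟨z, hz, rfl⟩, hle⟩
  · rintro _ ⟨z, hz, rfl⟩
    exact ⟨_, ⟨z, ⟨hz.2.1.1, hz.2.2.1.symm⟩, rfl⟩, le_rfl⟩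

theorem stmt19 {d : ℕ} (X : Finset (Fin d → ℝ))
    (hspan : Submodule.span ℝ (X : Set (Fin d → ℝ)) = ⊤)
    (θ xs : Fin d → ℝ) (hxs : IsExtremePt X xs)
    (hgap : ∀ x ∈ X, x ≠ xs → (xs - x) ⬝ᵥ θ > 0)
    (hcone : convexHull ℝ (X : Set (Fin d → ℝ)) ⊆
      {p | ∃ α : (Fin d → ℝ) → ℝ, (∀ z, 0 ≤ α z) ∧
        (∀ z, α z ≠ 0 → AdjacentPts X xs z) ∧
        p = xs + ∑ z ∈ X, α z • (z - xs)})
    (M : Matrix (Fin d) (Fin d) ℝ) (hM : M.PosDef) :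
    sSup ((fun x => ((xs - x) ⬝ᵥ M.mulVec (xs - x)) / ((xs - x) ⬝ᵥ θ) ^ 2) ''
        ((X : Set (Fin d → ℝ)) \ {xs})) =
      sSup ((fun x' => ((xs - x') ⬝ᵥ M.mulVec (xs - x')) / ((xs - x') ⬝ᵥ θ) ^ 2) ''
        {x' | AdjacentPts X xs x'}) :=
  stmt19_general X θ xs hgap hcone M hM
end
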